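/- With T defined by the recursion T([b₁]) = (y^{b₁} − 1)/(y − 1) + x − 1 and T([b₁, …, b_{2k+1}]) = ((x^{b_{2k}} − 1)/(x − 1))·((y^{b_{2k+1}} − 1)/(y − 1) + x − 1)·T([b₁, …, b_{2k−1}]) + T([b₁, …, b_{2k−2}, b_{2k−1} + b_{2k+1}]), the evaluation of T([b₁, …, b_{2k+1}]) at x = y = 1 (taking (x^b − 1)/(x − 1) → b) equals Σ_{A ⊆ E} ∏_{bᵢ ∈ A} bᵢ · ∏_{α ∈ f(A)} α, where E and f(A) are as in the closed-form theorem. This number is the determinant of the corresponding rational link. -/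

import Mathlib

/-- The truncated geometric sum `(x^n − 1)/(x − 1) = 1 + x + ⋯ + x^{n-1}`
(which becomes `n` at `x = 1`). -/
def geom {R : Type*} [CommRing R] (x : R) (n : ℕ) : R := ∑ i ∈ Finset.range n, x ^ i

/-- The recursion for the Tutte polynomial of the canonical Tait graph, on the
*reversed* list of denominators. -/
def Trev {R : Type*} [CommRing R] (x y : R) : List ℕ → R
  | [b] => geom y b + x - 1
  | c :: b :: a :: rest =>
      geom x b * (geom y c + x - 1) * Trev x y (a :: rest) + Trev x y ((a + c) :: rest)
  | _ => 0
termination_by l => l.length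

/-- `T([b₁, …, b_{2k+1}])`, defined by the recursion
`T([b₁]) = (y^{b₁}−1)/(y−1) + x − 1`,
`T([b₁, …, b_{2k+1}]) = ((x^{b_{2k}}−1)/(x−1))·((y^{b_{2k+1}}−1)/(y−1)+x−1)·T([b₁, …, b_{2k−1}])
  + T([b₁, …, b_{2k−2}, b_{2k−1}+b_{2k+1}])`. -/
def Tpoly {R : Type*} [CommRing R] (x y : R) (l : List ℕ) : R := Trev x y l.reverse

/-- The list of blocks into which a set `A ⊆ {1, …, k}` of cut points splits
`{0, 1, …, k}`. -/
def blocks (k : ℕ) (A : Finset ℕ) : List (ℕ × ℕ) :=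
  List.zip (0 :: A.sort (· ≤ ·)) (A.sort (· ≤ ·) ++ [k + 1])

/-- `f(A)`: the multiset of block sums of the odd-indexed entries determined by a set
`A` of even positions (encoded by `a ↦ 2a`, `a ∈ A ⊆ {1, …, k}`). -/
def fSums (k : ℕ) (b : ℕ → ℕ) (A : Finset ℕ) : Multiset ℕ :=
  ((blocks k A).map fun p => ∑ j ∈ Finset.Ico p.1 p.2, b (2 * j + 1) : List ℕ)

/-!
At `x = y = 1` the geometric sums become the entries themselves, so `T` obeys

    T(b₁, …, b_{2k+3}) = b_{2k+2} b_{2k+3} T(b₁, …, b_{2k+1}) + T(b₁, …, b_{2k}, b_{2k+1}+b_{2k+3}).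

The subset sum satisfies the same recursion: splitting according to whether the last even
position `2k+2` is selected, a selected one closes a final block `{b_{2k+3}}`, while an
unselected one lets `b_{2k+3}` join the last block, exactly as in the merged sequence.
Both sides agree for `k = 0`, so induction on `k` finishes the proof.
-/

open Finset

lemma Finset.sort_insert_of_forall_lt {α : Type*} [LinearOrder α] {s : Finset α} {m : α}
    (h : ∀ x ∈ s, x < m) : (insert m s).sort (· ≤ ·) = s.sort (· ≤ ·) ++ [m] := by
  have hm : m ∉ s := fun hm => lt_irrefl m (h m hm)
  refine List.Perm.eq_of_pairwise' (r := (· ≤ ·)) (pairwise_sort _ _) ?_ ?_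
  · rw [List.pairwise_append]
    refine ⟨pairwise_sort _ _, List.pairwise_singleton _ _, fun x hx y hy => ?_⟩
    rw [List.mem_singleton.mp hy]
    exact (h x ((mem_sort _).mp hx)).le
  · rw [List.perm_ext_iff_of_nodup (sort_nodup _ _)
      ((List.nodup_append.mpr ⟨sort_nodup _ _, List.nodup_singleton m, by simpa using hm⟩))]
    intro x
    simp [or_comm]

lemma List.reverse_map_range_succ {α : Type*} (f : ℕ → α) (n : ℕ) :
    ((List.range (n + 1)).map f).reverse = f n :: ((List.range n).map f).reverse := by
  simp [List.range_succ]

def mergeLast (k : ℕ) (b : ℕ → ℕ) : ℕ → ℕ :=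
  Function.update b (2 * k + 1) (b (2 * k + 1) + b (2 * k + 3))

lemma mergeLast_of_lt {k i : ℕ} (b : ℕ → ℕ) (hi : i < 2 * k + 1) : mergeLast k b i = b i :=
  Function.update_of_ne hi.ne _ _

lemma sum_Ico_mergeLast (k : ℕ) (b : ℕ → ℕ) {a : ℕ} (ha : a ≤ k) :
    ∑ j ∈ Ico a (k + 2), b (2 * j + 1) =
      ∑ j ∈ Ico a (k + 1), mergeLast k b (2 * j + 1) := by
  rw [sum_Ico_succ_top (by omega), sum_Ico_succ_top ha, sum_Ico_succ_top ha,
    sum_congr rfl fun j hj => mergeLast_of_lt b (by simp at hj; omega)]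
  simp only [mergeLast, Function.update_self]
  rw [add_assoc]
  rfl

lemma prod_blockSums_mergeLast (k : ℕ) (b : ℕ → ℕ) :
    ∀ (l : List ℕ), (∀ x ∈ l, x ≤ k) → ∀ a ≤ k,
      ((List.zip (a :: l) (l ++ [k + 2])).map fun p => ∑ j ∈ Ico p.1 p.2, b (2 * j + 1)).prod
        = ((List.zip (a :: l) (l ++ [k + 1])).map
            fun p => ∑ j ∈ Ico p.1 p.2, mergeLast k b (2 * j + 1)).prod
  | [], _, a, ha => by simp [sum_Ico_mergeLast k b ha]
  | x :: l, hl, a, _ => by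
    have hx : x ≤ k := hl x List.mem_cons_self
    simp only [List.cons_append, List.zip_cons_cons, List.map_cons, List.prod_cons]
    rw [prod_blockSums_mergeLast k b l (fun y hy => hl y (List.mem_cons_of_mem x hy)) x hx,
      sum_congr rfl fun j hj => mergeLast_of_lt b (by simp at hj; omega)]

lemma blocks_succ_insert {k : ℕ} {A : Finset ℕ} (hA : A ⊆ Icc 1 k) :
    blocks (k + 1) (insert (k + 1) A) = blocks k A ++ [(k + 1, k + 2)] := by
  have hlt : ∀ x ∈ A, x < k + 1 := fun x hx => by have := hA hx; simp at this; omega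
  rw [blocks, sort_insert_of_forall_lt hlt, ← List.cons_append, List.zip_append (by simp)]
  simp [blocks]

lemma prod_fSums_succ_insert (k : ℕ) (b : ℕ → ℕ) {A : Finset ℕ} (hA : A ⊆ Icc 1 k) :
    (fSums (k + 1) b (insert (k + 1) A)).prod = (fSums k b A).prod * b (2 * k + 3) := by
  simp only [fSums, blocks_succ_insert hA, List.map_append, Multiset.prod_coe, List.prod_append,
    List.map_cons, List.map_nil, List.prod_cons, List.prod_nil, mul_one, Nat.Ico_succ_singleton,
    sum_singleton]
  rfl

lemma prod_fSums_succ (k : ℕ) (b : ℕ → ℕ) {A : Finset ℕ} (hA : A ⊆ Icc 1 k) :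
    (fSums (k + 1) b A).prod = (fSums k (mergeLast k b) A).prod := by
  simp only [fSums, blocks, Multiset.prod_coe]
  exact prod_blockSums_mergeLast k b _
    (fun x hx => by have := hA ((mem_sort _).mp hx); simp at this; omega) 0 k.zero_le

def detSum (k : ℕ) (b : ℕ → ℕ) : ℕ :=
  ∑ A ∈ (Icc 1 k).powerset, (∏ a ∈ A, b (2 * a)) * (fSums k b A).prod

lemma detSum_zero (b : ℕ → ℕ) : detSum 0 b = b 1 := by
  simp [detSum, fSums, blocks]

lemma detSum_succ (k : ℕ) (b : ℕ → ℕ) :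
    detSum (k + 1) b =
      b (2 * k + 2) * b (2 * k + 3) * detSum k b + detSum k (mergeLast k b) := by
  have hIcc : Icc 1 (k + 1) = insert (k + 1) (Icc 1 k) := by ext x; simp; omega
  have hk : k + 1 ∉ Icc 1 k := by simp
  rw [detSum, hIcc, sum_powerset_insert hk, add_comm, detSum, detSum, mul_sum]
  congr 1
  · refine sum_congr rfl fun A hA => ?_
    rw [mem_powerset] at hA
    rw [prod_fSums_succ_insert k b hA, prod_insert fun h => hk (hA h), Nat.mul_succ]
    ring
  · refine sum_congr rfl fun A hA => ?_
    rw [mem_powerset] at hA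
    rw [prod_fSums_succ k b hA]
    congr 1
    exact prod_congr rfl fun a ha => by
      have := hA ha; simp at this; exact (mergeLast_of_lt b (by omega)).symm

section

variable {R : Type*} [CommRing R]

lemma geom_one (n : ℕ) : geom (1 : R) n = n := by simp [geom]

lemma Trev_one_one_succ (k : ℕ) (b : ℕ → ℕ) :
    Trev (1 : R) 1 ((List.range (2 * (k + 1) + 1)).map fun i => b (i + 1)).reverse
      = b (2 * k + 2) * b (2 * k + 3) *
          Trev 1 1 ((List.range (2 * k + 1)).map fun i => b (i + 1)).reverse
        + Trev 1 1 ((List.range (2 * k + 1)).map fun i => mergeLast k b (i + 1)).reverse := by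
  have htail : ((List.range (2 * k)).map fun i => mergeLast k b (i + 1))
      = (List.range (2 * k)).map fun i => b (i + 1) :=
    List.map_congr_left fun i hi => mergeLast_of_lt b (by simp at hi; omega)
  simp only [show 2 * (k + 1) + 1 = 2 * k + 1 + 1 + 1 by ring, List.reverse_map_range_succ, htail]
  rw [Trev, geom_one, geom_one]
  simp only [mergeLast, Function.update_self]
  rw [add_sub_cancel_right]

theorem Trev_one_one_eq_detSum (k : ℕ) (b : ℕ → ℕ) :
    Trev (1 : R) 1 ((List.range (2 * k + 1)).map fun i => b (i + 1)).reverse = detSum k b := by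
  induction k generalizing b with
  | zero => simp [Trev, geom_one, detSum_zero]
  | succ k ih =>
    rw [Trev_one_one_succ, ih, ih, detSum_succ]
    push_cast
    ring

end

theorem Tpoly_one_one_det_general (k : ℕ) (b : ℕ → ℕ) :
    Tpoly (1 : ℤ) 1 ((List.range (2 * k + 1)).map fun i => b (i + 1)) =
      ∑ A ∈ (Finset.Icc 1 k).powerset,
        (∏ a ∈ A, (b (2 * a) : ℤ)) * ((fSums k b A).map fun α => (α : ℤ)).prod := by
  rw [Tpoly, Trev_one_one_eq_detSum, detSum, Nat.cast_sum]
  refine sum_congr rfl fun A _ => ?_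
  rw [Nat.cast_mul, Nat.cast_prod, Nat.cast_multiset_prod]
  -- the cast `fun α => (α : ℤ)` in the statement elaborates through the multiset monad
  simp

/-- **Determinant formula**: the evaluation of `T([b₁, …, b_{2k+1}])` at `x = y = 1`
(where `(x^b−1)/(x−1)` becomes `b`) equals
`Σ_{A ⊆ E} ∏_{bᵢ∈A} bᵢ · ∏_{α∈f(A)} α`; this number is the determinant of the
corresponding rational link. -/
theorem Tpoly_one_one_det (k : ℕ) (b : ℕ → ℕ)
    (hb : ∀ i, 1 ≤ i → i ≤ 2 * k + 1 → 1 ≤ b i) :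
    Tpoly (1 : ℤ) 1 ((List.range (2 * k + 1)).map fun i => b (i + 1)) =
      ∑ A ∈ (Finset.Icc 1 k).powerset,
        (∏ a ∈ A, (b (2 * a) : ℤ)) * ((fSums k b A).map fun α => (α : ℤ)).prod :=
  Tpoly_one_one_det_general k b
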